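/- arXiv:1510.02786 — 3 statements merged into one kernel-verified Lean document; each statement's English description precedes it below -/
import Mathlib

section
/- The total variation distance between Binomial(m,p) and Poisson(μ) satisfies d_TV(Binom(m,p), Pois(μ)) ≤ mp² + ψ(μ − mp), where ψ(u) = e^{|u|}(1+|u|) − 1. -/
/-- `ψ(u) = e^{|u|}(1+|u|) - 1`. -/
noncomputable def psiTV (u : ℝ) : ℝ := Real.exp |u| * (1 + |u|) - 1

/-!
Binom(m, p) is the `m`-fold convolution of Bernoulli(p) = Binom(1, p), and Pois(mp) is the
`m`-fold convolution of Pois(p). Convolution is `1`-Lipschitz in `ℓ¹` against probability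
vectors, so `‖Binom(m, p) - Pois(mp)‖₁ ≤ m ‖Binom(1, p) - Pois(p)‖₁ = 2mp(1 - e^{-p}) ≤ 2mp²`
(Le Cam). In the same way `Pois(a + t) = Pois(a) ∗ Pois(t)` and `Pois(a) = Pois(a) ∗ Pois(0)`
give `‖Pois(a) - Pois(a + t)‖₁ ≤ ‖Pois(0) - Pois(t)‖₁ = 2(1 - e^{-t}) ≤ 2t`. The triangle
inequality and `|u| ≤ ψ(u)` finish the proof.
-/

open Finset Real

namespace BinomialPoisson

noncomputable def poisson (l : ℝ) (k : ℕ) : ℝ := exp (-l) * l ^ k / k.factorial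

noncomputable def binomial (m : ℕ) (p : ℝ) (k : ℕ) : ℝ :=
  m.choose k * p ^ k * (1 - p) ^ (m - k)

def natConv (f g : ℕ → ℝ) (k : ℕ) : ℝ := ∑ ij ∈ antidiagonal k, f ij.1 * g ij.2

section Convolution

variable {f f' g g' : ℕ → ℝ}

theorem summable_natConv (hf : Summable f) (hg : Summable g) : Summable (natConv f g) :=
  (summable_norm_sum_mul_antidiagonal_of_summable_norm hf.norm hg.norm).of_norm

theorem tsum_natConv (hf : Summable f) (hg : Summable g) :
    ∑' k, natConv f g k = (∑' k, f k) * ∑' k, g k :=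
  (tsum_mul_tsum_eq_tsum_sum_antidiagonal_of_summable_norm hf.norm hg.norm).symm

theorem abs_natConv_sub_natConv_le (k : ℕ) :
    |natConv f g k - natConv f' g' k|
      ≤ natConv (fun i => |f i - f' i|) (fun i => |g i|) k
        + natConv (fun i => |f' i|) (fun i => |g i - g' i|) k := by
  simp only [natConv, ← sum_sub_distrib, ← sum_add_distrib, ← abs_mul]
  refine (abs_sum_le_sum_abs _ _).trans (sum_le_sum fun ij _ => ?_)
  calc |f ij.1 * g ij.2 - f' ij.1 * g' ij.2|
      = |(f ij.1 - f' ij.1) * g ij.2 + f' ij.1 * (g ij.2 - g' ij.2)| := by ring_nf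
    _ ≤ _ := abs_add_le _ _

theorem tsum_abs_natConv_sub_natConv_le (hf : Summable f) (hf' : Summable f')
    (hg : Summable g) (hg' : Summable g') :
    ∑' k, |natConv f g k - natConv f' g' k|
      ≤ (∑' k, |f k - f' k|) * (∑' k, |g k|) + (∑' k, |f' k|) * ∑' k, |g k - g' k| := by
  have h₁ := summable_natConv (hf.sub hf').abs hg.abs
  have h₂ := summable_natConv hf'.abs (hg.sub hg').abs
  calc ∑' k, |natConv f g k - natConv f' g' k|
      ≤ ∑' k, (natConv (fun i => |f i - f' i|) (fun i => |g i|) k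
          + natConv (fun i => |f' i|) (fun i => |g i - g' i|) k) :=
        ((h₁.add h₂).of_nonneg_of_le (fun _ => abs_nonneg _)
          abs_natConv_sub_natConv_le).tsum_le_tsum abs_natConv_sub_natConv_le (h₁.add h₂)
    _ = _ := by
        rw [h₁.tsum_add h₂, tsum_natConv (hf.sub hf').abs hg.abs,
          tsum_natConv hf'.abs (hg.sub hg').abs]

end Convolution

theorem tsum_abs_sub_triangle {f g h : ℕ → ℝ} (hf : Summable f) (hg : Summable g)
    (hh : Summable h) :
    ∑' k, |f k - h k| ≤ ∑' k, |f k - g k| + ∑' k, |g k - h k| := by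
  rw [← (hf.sub hg).abs.tsum_add (hg.sub hh).abs]
  exact (hf.sub hh).abs.tsum_le_tsum (fun k => abs_sub_le _ _ _)
    ((hf.sub hg).abs.add (hg.sub hh).abs)

section Poisson

@[simp]
theorem poisson_zero_right (l : ℝ) : poisson l 0 = exp (-l) := by simp [poisson]

@[simp]
theorem poisson_one_right (l : ℝ) : poisson l 1 = exp (-l) * l := by simp [poisson]

theorem poisson_zero_left_succ (k : ℕ) : poisson 0 (k + 1) = 0 := by simp [poisson]

theorem hasSum_poisson (l : ℝ) : HasSum (poisson l) 1 := by
  have h := (NormedSpace.expSeries_div_hasSum_exp l).mul_left (exp (-l))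
  rw [← exp_eq_exp_ℝ, ← exp_add, neg_add_cancel, exp_zero] at h
  rwa [show poisson l = fun k => exp (-l) * (l ^ k / k.factorial) from
    funext fun k => mul_div_assoc _ _ _]

theorem summable_poisson (l : ℝ) : Summable (poisson l) := (hasSum_poisson l).summable

theorem poisson_nonneg {l : ℝ} (hl : 0 ≤ l) (k : ℕ) : 0 ≤ poisson l k := by
  unfold poisson; positivity

theorem tsum_abs_poisson {l : ℝ} (hl : 0 ≤ l) : ∑' k, |poisson l k| = 1 := by
  simp_rw [abs_of_nonneg (poisson_nonneg hl _)]
  exact (hasSum_poisson l).tsum_eq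

theorem natConv_poisson (a b : ℝ) : natConv (poisson a) (poisson b) = poisson (a + b) := by
  ext k
  simp only [natConv, poisson, (Commute.all a b).add_pow', nsmul_eq_mul, mul_sum, sum_div]
  refine sum_congr rfl fun ⟨i, j⟩ hij => ?_
  rw [HasAntidiagonal.mem_antidiagonal] at hij
  subst hij
  rw [Nat.cast_add_choose, neg_add, exp_add]
  field_simp

theorem tsum_poisson_add_two (l : ℝ) :
    ∑' k, poisson l (k + 2) = 1 - exp (-l) - exp (-l) * l := by
  have h := (summable_poisson l).sum_add_tsum_nat_add 2
  rw [(hasSum_poisson l).tsum_eq, sum_range_succ, sum_range_one, poisson_zero_right,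
    poisson_one_right] at h
  linarith

theorem tsum_abs_poisson_zero_sub_poisson {t : ℝ} (ht : 0 ≤ t) :
    ∑' k, |poisson 0 k - poisson t k| = 2 * (1 - exp (-t)) := by
  have hs : Summable fun k => |poisson 0 k - poisson t k| :=
    ((summable_poisson 0).sub (summable_poisson t)).abs
  have htail (k : ℕ) : |poisson 0 (k + 2) - poisson t (k + 2)| = poisson t (k + 2) := by
    rw [poisson_zero_left_succ, zero_sub, abs_neg, abs_of_nonneg (poisson_nonneg ht _)]
  have hexp : exp (-t) ≤ 1 := exp_le_one_iff.2 (neg_nonpos.2 ht)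
  rw [← hs.sum_add_tsum_nat_add 2, sum_range_succ, sum_range_one, poisson_zero_right,
    poisson_zero_right, poisson_zero_left_succ, poisson_one_right, neg_zero, exp_zero, zero_sub, abs_neg,
    abs_of_nonneg (sub_nonneg.2 hexp), abs_of_nonneg (by positivity)]
  simp_rw [htail]
  rw [tsum_poisson_add_two]
  ring

theorem tsum_abs_poisson_sub_poisson_le {a b : ℝ} (ha : 0 ≤ a) (hb : 0 ≤ b) :
    ∑' k, |poisson a k - poisson b k| ≤ 2 * |a - b| := by
  wlog hab : a ≤ b generalizing a b
  · simpa only [abs_sub_comm] using this hb ha (le_of_not_ge hab)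
  obtain ⟨t, ht, rfl⟩ : ∃ t, 0 ≤ t ∧ b = a + t := ⟨b - a, by linarith, by ring⟩
  have h := tsum_abs_natConv_sub_natConv_le (summable_poisson a) (summable_poisson a)
    (summable_poisson 0) (summable_poisson t)
  rw [natConv_poisson, natConv_poisson, add_zero, tsum_abs_poisson ha,
    tsum_abs_poisson_zero_sub_poisson ht] at h
  simp only [sub_self, abs_zero, tsum_zero, zero_mul, zero_add, one_mul] at h
  rw [sub_add_cancel_left, abs_neg, abs_of_nonneg ht]
  linarith [add_one_le_exp (-t)]

end Poisson

section Binomial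

theorem binomial_eq_zero_of_lt {m k : ℕ} (p : ℝ) (h : m < k) : binomial m p k = 0 := by
  simp [binomial, Nat.choose_eq_zero_of_lt h]

@[simp]
theorem binomial_one_zero (p : ℝ) : binomial 1 p 0 = 1 - p := by simp [binomial]

@[simp]
theorem binomial_one_one (p : ℝ) : binomial 1 p 1 = p := by simp [binomial]

theorem binomial_zero (p : ℝ) : binomial 0 p = poisson 0 := by
  ext (_ | k)
  · simp [binomial]
  · rw [binomial_eq_zero_of_lt p k.succ_pos, poisson_zero_left_succ]

theorem hasSum_binomial (m : ℕ) (p : ℝ) : HasSum (binomial m p) 1 := by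
  have h : HasSum (binomial m p) (∑ k ∈ range (m + 1), binomial m p k) :=
    hasSum_sum_of_ne_finset_zero fun k hk => binomial_eq_zero_of_lt p (by simpa using hk)
  have hbinom := (add_pow p (1 - p) m).symm
  rw [add_sub_cancel, one_pow] at hbinom
  convert h using 1
  rw [← hbinom]
  exact sum_congr rfl fun k _ => by rw [binomial]; ring

theorem binomial_nonneg {p : ℝ} (hp0 : 0 ≤ p) (hp1 : p ≤ 1) (m k : ℕ) : 0 ≤ binomial m p k := by
  have : 0 ≤ 1 - p := by linarith
  unfold binomial; positivity

theorem tsum_abs_binomial {p : ℝ} (hp0 : 0 ≤ p) (hp1 : p ≤ 1) (m : ℕ) :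
    ∑' k, |binomial m p k| = 1 := by
  simp_rw [abs_of_nonneg (binomial_nonneg hp0 hp1 m _)]
  exact (hasSum_binomial m p).tsum_eq

theorem binomial_succ_succ (m k : ℕ) (p : ℝ) :
    binomial (m + 1) p (k + 1) = p * binomial m p k + (1 - p) * binomial m p (k + 1) := by
  rcases lt_trichotomy k m with h | rfl | h
  · obtain ⟨n, rfl⟩ := Nat.exists_eq_add_of_lt h
    simp only [binomial, Nat.choose_succ_succ', Nat.cast_add,
      show k + n + 1 + 1 - (k + 1) = n + 1 by omega, show k + n + 1 - k = n + 1 by omega,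
      show k + n + 1 - (k + 1) = n by omega]
    ring
  · rw [binomial_eq_zero_of_lt p k.lt_succ_self, mul_zero, add_zero]
    simp only [binomial, Nat.choose_self, Nat.sub_self, pow_succ]
    ring
  · simp [binomial_eq_zero_of_lt p h, binomial_eq_zero_of_lt p (Nat.succ_lt_succ h),
      binomial_eq_zero_of_lt p (h.trans k.lt_succ_self)]

theorem natConv_binomial_one (m : ℕ) (p : ℝ) :
    natConv (binomial 1 p) (binomial m p) = binomial (m + 1) p := by
  ext (_ | k)
  · simp [natConv, binomial, pow_succ']
  · rw [natConv, Nat.sum_antidiagonal_succ, sum_eq_single (0, k)]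
    · simp only [zero_add, binomial_succ_succ m k, binomial_one_zero, binomial_one_one]
      ring
    · rintro ⟨_ | i, j⟩ hij hne
      · rw [HasAntidiagonal.mem_antidiagonal] at hij
        simp_all
      · simp [binomial_eq_zero_of_lt p (show 1 < i + 1 + 1 by omega)]
    · simp

theorem tsum_abs_binomial_one_sub_poisson {p : ℝ} (hp : 0 ≤ p) :
    ∑' k, |binomial 1 p k - poisson p k| = 2 * p * (1 - exp (-p)) := by
  have hs : Summable fun k => |binomial 1 p k - poisson p k| :=
    ((hasSum_binomial 1 p).summable.sub (summable_poisson p)).abs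
  have htail (k : ℕ) : |binomial 1 p (k + 2) - poisson p (k + 2)| = poisson p (k + 2) := by
    rw [binomial_eq_zero_of_lt p (by omega), zero_sub, abs_neg, abs_of_nonneg (poisson_nonneg hp _)]
  have hexp : exp (-p) ≤ 1 := exp_le_one_iff.2 (neg_nonpos.2 hp)
  have h₀ : |binomial 1 p 0 - poisson p 0| = exp (-p) - (1 - p) := by
    rw [binomial_one_zero, poisson_zero_right, abs_sub_comm,
      abs_of_nonneg (by linarith [add_one_le_exp (-p)])]
  have h₁ : |binomial 1 p 1 - poisson p 1| = p * (1 - exp (-p)) := by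
    rw [binomial_one_one, poisson_one_right, ← one_sub_mul, mul_comm,
      abs_of_nonneg (mul_nonneg hp (sub_nonneg.2 hexp))]
  rw [← hs.sum_add_tsum_nat_add 2, sum_range_succ, sum_range_one, h₀, h₁]
  simp_rw [htail]
  rw [tsum_poisson_add_two]
  ring

theorem tsum_abs_binomial_sub_poisson_le {p : ℝ} (hp0 : 0 ≤ p) (hp1 : p ≤ 1) (m : ℕ) :
    ∑' k, |binomial m p k - poisson (m * p) k| ≤ 2 * m * p ^ 2 := by
  induction m with
  | zero => simp [binomial_zero]
  | succ n ih =>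
    rw [← natConv_binomial_one, Nat.cast_succ, add_one_mul, add_comm, ← natConv_poisson]
    calc _ ≤ (∑' k, |binomial 1 p k - poisson p k|) * (∑' k, |binomial n p k|)
          + (∑' k, |poisson p k|) * ∑' k, |binomial n p k - poisson (n * p) k| :=
          tsum_abs_natConv_sub_natConv_le (hasSum_binomial 1 p).summable (summable_poisson p)
            (hasSum_binomial n p).summable (summable_poisson _)
      _ = 2 * p * (1 - exp (-p)) + ∑' k, |binomial n p k - poisson (n * p) k| := by
          rw [tsum_abs_binomial_one_sub_poisson hp0, tsum_abs_binomial hp0 hp1,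
            tsum_abs_poisson hp0, mul_one, one_mul]
      _ ≤ 2 * p * p + 2 * n * p ^ 2 := by
          gcongr
          linarith [add_one_le_exp (-p)]
      _ = 2 * (n + 1) * p ^ 2 := by ring

end Binomial

end BinomialPoisson

theorem abs_le_psiTV (u : ℝ) : |u| ≤ psiTV u := by
  have := add_one_le_exp |u|
  unfold psiTV
  nlinarith [abs_nonneg u]

open BinomialPoisson in
theorem stmt_13 (m : ℕ) (p μ : ℝ) (hp0 : 0 ≤ p) (hp1 : p ≤ 1) (hμ : 0 ≤ μ) :
    (1 / 2) * ∑' k : ℕ,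
        |(if k ≤ m then (m.choose k : ℝ) * p ^ k * (1 - p) ^ (m - k) else 0)
          - Real.exp (-μ) * μ ^ k / (k.factorial : ℝ)|
      ≤ m * p ^ 2 + psiTV (μ - m * p) := by
  have hbinomial (k : ℕ) :
      (if k ≤ m then (m.choose k : ℝ) * p ^ k * (1 - p) ^ (m - k) else 0) = binomial m p k := by
    split_ifs with h
    · rfl
    · exact (binomial_eq_zero_of_lt p (not_le.1 h)).symm
  simp only [hbinomial]
  calc (1 / 2) * ∑' k, |binomial m p k - poisson μ k|
      ≤ (1 / 2) * (∑' k, |binomial m p k - poisson (m * p) k|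
          + ∑' k, |poisson (m * p) k - poisson μ k|) := by
        gcongr
        exact tsum_abs_sub_triangle (hasSum_binomial m p).summable (summable_poisson _)
          (summable_poisson μ)
    _ ≤ (1 / 2) * (2 * m * p ^ 2 + 2 * |m * p - μ|) := by
        gcongr
        · exact tsum_abs_binomial_sub_poisson_le hp0 hp1 m
        · exact tsum_abs_poisson_sub_poisson_le (by positivity) hμ
    _ ≤ m * p ^ 2 + psiTV (μ - m * p) := by
        rw [abs_sub_comm]
        linarith [abs_le_psiTV (μ - m * p)]
end

section
/- Consider the Galton–Watson tree inference model: the root u has label τ_u ∼ Bernoulli(K/n), and each vertex i with label τ_i has L_i children of label 1 and M_i children of label 0, where L_i ∼ Pois(Kp) if τ_i = 1, L_i ∼ Pois(Kq) if τ_i = 0, and M_i ∼ Pois((n−K)q) for either label, all independent. Let Λ_u^t = log(P(T_u^t | τ_u=1)/P(T_u^t | τ_u=0)) be the log likelihood ratio of the unlabeled observed tree of depth t, and similarly Λ^t_{i→π(i)} for subtrees. Then for t ≥ 0: Λ^{t+1}_u = −K(p−q) + Σ_{ℓ ∈ ∂u} log( (e^{Λ^t_{ℓ→u} − ν}(p/q)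 + 1)/(e^{Λ^t_{ℓ→u} − ν} + 1) ), where ν = log((n−K)/K), with analogous recursion for Λ^{t+1}_{i→π(i)} and initial condition Λ⁰_{i→π(i)} = 0. -/
/-- Rooted (ordered) trees: the observed structure of the Galton–Watson tree
(labels are not observed). -/
inductive PTree : Type
  | node : List PTree → PTree

/-- `lik K n p q t τ T` is the likelihood `P(T_u^t | τ_u = τ)` of observing the
depth-`t` truncation of the tree `T` given that the root has label `τ`, in the
Galton–Watson model where a label-1 vertex has `Pois(Kp)` children of label 1
and a label-0 vertex has `Pois(Kq)` children of label 1, every vertex has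
`Pois((n-K)q)` children of label 0, and the children labels are marginalized
out (equivalently, by Poisson splitting, the total number of children is
`Pois(Kp+(n-K)q)` resp. `Pois(nq)` and children are labeled i.i.d.). -/
noncomputable def lik (K n p q : ℝ) : ℕ → Bool → PTree → ℝ
  | 0, _, _ => 1
  | (t + 1), true, PTree.node cs =>
      Real.exp (-(K * p + (n - K) * q)) / (Nat.factorial cs.length) *
        (cs.map fun c =>
          K * p * lik K n p q t true c + (n - K) * q * lik K n p q t false c).prod
  | (t + 1), false, PTree.node cs =>
      Real.exp (-(n * q)) / (Nat.factorial cs.length) *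
        (cs.map fun c =>
          K * q * lik K n p q t true c + (n - K) * q * lik K n p q t false c).prod

/-- The log likelihood ratio `Λ^t` for the root label given the depth-`t`
observed tree. -/
noncomputable def LLR (K n p q : ℝ) (t : ℕ) (T : PTree) : ℝ :=
  Real.log (lik K n p q t true T / lik K n p q t false T)

/-!
The likelihood of the depth-`(t+1)` tree factorises over the children of the root, each child
contributing its own depth-`t` likelihood mixed over its two possible labels. In the ratio of the
two root labels the Poisson normalisations `e^{-(Kp+(n-K)q)}` and `e^{-nq}` leave the factor
`e^{-K(p-q)}` and the factorials cancel, so taking logarithms turns the product over children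
into a sum. The prior odds `K/(n-K) = e^{-ν}` of a child's label then rewrite each child's factor
`(Kp A + (n-K)q B)/(Kq A + (n-K)q B)` in terms of `A/B = e^{Λ^t}`.
-/

open Real

theorem List.prod_map_div {ι G : Type*} [DivisionCommMonoid G] (l : List ι) (f g : ι → G) :
    (l.map fun i => f i / g i).prod = (l.map f).prod / (l.map g).prod := by
  simpa using Multiset.prod_map_div (m := (l : Multiset ι)) (f := f) (g := g)

section Likelihood

variable {K n p q : ℝ}

theorem lik_zero (τ : Bool) (T : PTree) : lik K n p q 0 τ T = 1 := by
  rw [lik]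

theorem lik_pos (hK : 0 ≤ K) (hKn : K < n) (hp : 0 ≤ p) (hq : 0 < q) :
    ∀ t τ T, 0 < lik K n p q t τ T := by
  have hnK : 0 < n - K := sub_pos.2 hKn
  intro t
  induction t with
  | zero => intro τ T; simp [lik_zero]
  | succ t ih =>
    rintro τ ⟨cs⟩
    have hfac : (0 : ℝ) < cs.length.factorial := mod_cast cs.length.factorial_pos
    have h1 := ih true
    have h0 := ih false
    cases τ <;> rw [lik] <;> refine mul_pos (div_pos (exp_pos _) hfac) (List.prod_pos ?_) <;>
    · simp only [List.mem_map]
      rintro _ ⟨c, -, rfl⟩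
      have := h1 c
      have := h0 c
      positivity

theorem lik_succ_div (t : ℕ) (cs : List PTree) :
    lik K n p q (t + 1) true (PTree.node cs) / lik K n p q (t + 1) false (PTree.node cs)
      = exp (-(K * (p - q))) *
        (cs.map fun c =>
          (K * p * lik K n p q t true c + (n - K) * q * lik K n p q t false c) /
            (K * q * lik K n p q t true c + (n - K) * q * lik K n p q t false c)).prod := by
  have hfac : (cs.length.factorial : ℝ) ≠ 0 := mod_cast cs.length.factorial_ne_zero
  have hexp : exp (-(K * (p - q))) = exp (-(K * p + (n - K) * q)) / exp (-(n * q)) := by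
    rw [← exp_sub]; ring_nf
  rw [lik, lik, hexp, List.prod_map_div, mul_div_mul_comm, div_div_div_cancel_right₀ hfac]

end Likelihood

theorem mixture_ratio_eq {K n p q A B : ℝ} (hK : 0 < K) (hKn : K < n) (hq : 0 < q)
    (hA : 0 < A) (hB : 0 < B) :
    (K * p * A + (n - K) * q * B) / (K * q * A + (n - K) * q * B)
      = (exp (log (A / B) - log ((n - K) / K)) * (p / q) + 1) /
          (exp (log (A / B) - log ((n - K) / K)) + 1) := by
  have hnK : 0 < n - K := sub_pos.2 hKn
  rw [exp_sub, exp_log (div_pos hA hB), exp_log (div_pos hnK hK)]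
  field_simp

theorem stmt_16_general (K n p q : ℝ) (h0q : 0 < q) (hqp : q ≤ p)
    (hK : 1 ≤ K) (hKn : K < n) (ν : ℝ) (hν : ν = Real.log ((n - K) / K)) :
    (∀ (t : ℕ) (cs : List PTree),
      LLR K n p q (t + 1) (PTree.node cs)
        = -(K * (p - q)) +
          (cs.map fun c =>
            Real.log ((Real.exp (LLR K n p q t c - ν) * (p / q) + 1)
              / (Real.exp (LLR K n p q t c - ν) + 1))).sum) ∧
    (∀ T : PTree, LLR K n p q 0 T = 0) := by
  have hK0 : 0 < K := one_pos.trans_le hK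
  have hp0 : 0 < p := h0q.trans_le hqp
  have hpos := lik_pos hK0.le hKn hp0.le h0q
  refine ⟨fun t cs => ?_, fun T => by simp [LLR, lik_zero]⟩
  have hfactor_pos : ∀ x ∈ cs.map fun c =>
      (K * p * lik K n p q t true c + (n - K) * q * lik K n p q t false c) /
        (K * q * lik K n p q t true c + (n - K) * q * lik K n p q t false c), 0 < x := by
    simp only [List.mem_map]
    rintro _ ⟨c, -, rfl⟩
    rw [mixture_ratio_eq hK0 hKn h0q (hpos t true c) (hpos t false c)]
    positivity
  rw [LLR, lik_succ_div, log_mul (exp_ne_zero _) (List.prod_pos hfactor_pos).ne', log_exp,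
    log_list_prod fun x hx => (hfactor_pos x hx).ne', List.map_map, hν]
  refine congrArg _ (congrArg _ (List.map_congr_left fun c _ => ?_))
  rw [Function.comp_apply, mixture_ratio_eq hK0 hKn h0q (hpos t true c) (hpos t false c), LLR]

/-- Belief propagation computes the log likelihood ratio exactly on the
Galton–Watson tree: the recursion for `Λ^{t+1}` in terms of the children's
`Λ^t`, together with the initial condition `Λ⁰ = 0`. -/
theorem stmt_16 (K n p q : ℝ) (h0q : 0 < q) (hqp : q ≤ p) (hp1 : p ≤ 1)
    (hK : 1 ≤ K) (hKn : K < n) (ν : ℝ) (hν : ν = Real.log ((n - K) / K)) :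
    (∀ (t : ℕ) (cs : List PTree),
      LLR K n p q (t + 1) (PTree.node cs)
        = -(K * (p - q)) +
          (cs.map fun c =>
            Real.log ((Real.exp (LLR K n p q t c - ν) * (p / q) + 1)
              / (Real.exp (LLR K n p q t c - ν) + 1))).sum) ∧
    (∀ T : PTree, LLR K n p q 0 T = 0) :=
  stmt_16_general K n p q h0q hqp hK hKn ν hν
end

section
/- In the Poisson tree model with λ = K²(p−q)²/((n−K)q), the exponential moments satisfy E[e^{2Z₁^{t+1}}] ≤ exp(C b_t) with C = λ(2 + p/q), E[e^{3Z₁^{t+1}}] ≤ exp(C' b_t) with C' = λ(3 + 2(p/q) + (p/q)²), and more generally for any integer h ≥ 2, E[e^{hZ₀^{t+1}}] = E[e^{(h−1)Z₁^{t+1}}] ≤ exp( λ b_t · Σ_{j=2}^h C(h,j)(p/q − 1)^{j−2} ). -/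
open MeasureTheory Real Finset

/-!
Changing measure from `Z₀` to `Z₁` turns `E[e^{h Z₀}]` into `E[e^{(h-1) Z₁}]`. In the exact
identity for `E[e^{h Z₀^{t+1}}]`, the weight `w = e^z/(1+e^{z-ν})` lies in `[0, e^ν]`, so
`E[w^{j-1}] ≤ e^{(j-2)ν} b_t`; with `e^ν = (n-K)/K` the `j`-th term of the exponent then collapses
to `λ b_t C(h,j) (p/q-1)^{j-2}`. The cases `h = 3, 4` give the bounds on `E[e^{2Z₁}]`, `E[e^{3Z₁}]`.
-/

theorem lintegral_exp_mul_eq_of_change_of_measure {Ω : Type*} [MeasurableSpace Ω]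
    {μ : Measure Ω} {X Y : Ω → ℝ}
    (hXY : ∀ f : ℝ → ENNReal, Measurable f →
      ∫⁻ ω, f (X ω) ∂μ = ∫⁻ ω, f (Y ω) * ENNReal.ofReal (exp (-Y ω)) ∂μ)
    (c : ℝ) :
    ∫⁻ ω, ENNReal.ofReal (exp (c * X ω)) ∂μ
      = ∫⁻ ω, ENNReal.ofReal (exp ((c - 1) * Y ω)) ∂μ := by
  rw [hXY (fun x ↦ ENNReal.ofReal (exp (c * x))) (by fun_prop)]
  congr 1 with ω
  rw [← ENNReal.ofReal_mul (exp_nonneg _), ← exp_add]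
  ring_nf

theorem exp_div_one_add_exp_sub_le (z ν : ℝ) : exp z / (1 + exp (z - ν)) ≤ exp ν := by
  rw [div_le_iff₀ (by positivity), mul_add, mul_one, ← exp_add, add_sub_cancel]
  linarith [exp_pos ν]

theorem integral_pow_succ_le_mul_integral {Ω : Type*} [MeasurableSpace Ω] {μ : Measure Ω}
    [IsFiniteMeasure μ] {f : Ω → ℝ} {M : ℝ} (hf : AEStronglyMeasurable f μ)
    (h0 : ∀ ω, 0 ≤ f ω) (hM : ∀ ω, f ω ≤ M) (m : ℕ) :
    ∫ ω, f ω ^ (m + 1) ∂μ ≤ M ^ m * ∫ ω, f ω ∂μ := by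
  have hbdd : ∀ k : ℕ, Integrable (fun ω ↦ f ω ^ k) μ := fun k ↦
    .of_bound (hf.pow k) (M ^ k) (.of_forall fun ω ↦ by
      rw [norm_pow, norm_of_nonneg (h0 ω)]
      exact pow_le_pow_left₀ (h0 ω) (hM ω) k)
  rw [← integral_const_mul]
  refine integral_mono (hbdd _) ((by simpa using hbdd 1 : Integrable f μ).const_mul _) fun ω ↦ ?_
  rw [pow_succ]
  exact mul_le_mul_of_nonneg_right (pow_le_pow_left₀ (h0 ω) (hM ω) m) (h0 ω)

theorem poisson_coeff_mul_pow_eq {K n p q lam : ℝ} (hK : K ≠ 0) (hnK : n - K ≠ 0) (hq : q ≠ 0)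
    (hlam : lam = K ^ 2 * (p - q) ^ 2 / ((n - K) * q)) (m : ℕ) :
    K * (p - q) * (lam / (K * (p - q))) ^ (m + 1) * ((n - K) / K) ^ m
      = lam * (p / q - 1) ^ m := by
  rcases eq_or_ne p q with rfl | hpq
  · simp [hlam]
  have hratio : lam / (K * (p - q)) = K * (p - q) / ((n - K) * q) := by
    rw [hlam]; field_simp [sub_ne_zero.mpr hpq]
  have hstep : K * (p - q) / ((n - K) * q) * ((n - K) / K) = p / q - 1 := by
    field_simp
  calc K * (p - q) * (lam / (K * (p - q))) ^ (m + 1) * ((n - K) / K) ^ m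
      = K * (p - q) * (K * (p - q) / ((n - K) * q))
          * (K * (p - q) / ((n - K) * q) * ((n - K) / K)) ^ m := by
        rw [hratio, mul_pow, pow_succ]; ring
    _ = lam * (p / q - 1) ^ m := by
        rw [hstep, hlam]; field_simp

/-- `I k` plays the role of the moment `E[w^k]` of the weight `w ∈ [0, e^ν]`. -/
theorem poisson_exponent_le {K n p q lam ν : ℝ} (hK : 0 < K) (hKn : K < n) (hq : 0 < q)
    (hqp : q ≤ p) (hν : exp ν = (n - K) / K) (hlam : lam = K ^ 2 * (p - q) ^ 2 / ((n - K) * q))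
    {I : ℕ → ℝ} (hI : ∀ m, I (m + 1) ≤ exp ν ^ m * I 1) (h : ℕ) :
    K * (p - q) * ∑ j ∈ Icc 2 h, (h.choose j : ℝ) * (lam / (K * (p - q))) ^ (j - 1) * I (j - 1)
      ≤ lam * I 1 * ∑ j ∈ Icc 2 h, (h.choose j : ℝ) * (p / q - 1) ^ (j - 2) := by
  have hlam0 : 0 ≤ lam := by rw [hlam]; have := sub_pos.mpr hKn; positivity
  rw [mul_sum, mul_sum]
  refine sum_le_sum fun j hj ↦ ?_
  obtain ⟨m, rfl⟩ : ∃ m, j = m + 2 := ⟨j - 2, by grind⟩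
  simp only [Nat.add_sub_cancel, show m + 2 - 1 = m + 1 by omega]
  calc K * (p - q) * ((h.choose (m + 2) : ℝ) * (lam / (K * (p - q))) ^ (m + 1) * I (m + 1))
      ≤ K * (p - q) * ((h.choose (m + 2) : ℝ) * (lam / (K * (p - q))) ^ (m + 1)
          * (exp ν ^ m * I 1)) := by gcongr; exact hI m
    _ = lam * I 1 * ((h.choose (m + 2) : ℝ) * (p / q - 1) ^ m) := by
        rw [hν]
        linear_combination (h.choose (m + 2) : ℝ) * I 1
          * poisson_coeff_mul_pow_eq hK.ne' (sub_pos.mpr hKn).ne' hq.ne' hlam m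

theorem sum_Icc_two_three_choose_mul_pow (x : ℝ) :
    ∑ j ∈ Icc 2 3, (Nat.choose 3 j : ℝ) * x ^ (j - 2) = 3 + x := by
  rw [show Icc 2 3 = {2, 3} from rfl, sum_pair (by norm_num)]
  norm_num

theorem sum_Icc_two_four_choose_mul_pow (x : ℝ) :
    ∑ j ∈ Icc 2 4, (Nat.choose 4 j : ℝ) * x ^ (j - 2) = 6 + 4 * x + x ^ 2 := by
  rw [show Icc 2 4 = {2, 3, 4} from rfl, sum_insert (by norm_num), sum_pair (by norm_num)]
  norm_num [Nat.choose]
  ring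

theorem stmt_18_general {Ω : Type*} [MeasurableSpace Ω] (μ : Measure Ω)
    [IsProbabilityMeasure μ]
    (K n p q : ℝ) (h0q : 0 < q) (hqp : q ≤ p)
    (hK : 1 ≤ K) (hKn : K < n)
    (ν lam : ℝ) (hν : ν = Real.log ((n - K) / K))
    (hlam : lam = K ^ 2 * (p - q) ^ 2 / ((n - K) * q))
    (Z₀ Z₁ : ℕ → Ω → ℝ)
    (hZ₁ : ∀ t, Measurable (Z₁ t))
    (hchg : ∀ (t : ℕ) (f : ℝ → ENNReal), Measurable f →
      (∫⁻ ω, f (Z₀ t ω) ∂μ)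
        = ∫⁻ ω, f (Z₁ t ω) * ENNReal.ofReal (Real.exp (-(Z₁ t ω))) ∂μ)
    (hexact : ∀ (t : ℕ) (h : ℕ), 2 ≤ h →
      (∫⁻ ω, ENNReal.ofReal (Real.exp ((h : ℝ) * Z₀ (t + 1) ω)) ∂μ)
        = ENNReal.ofReal (Real.exp (K * (p - q) *
            ∑ j ∈ Finset.Icc 2 h, (h.choose j : ℝ) * (lam / (K * (p - q))) ^ (j - 1)
              * ∫ ω, (Real.exp (Z₁ t ω) / (1 + Real.exp (Z₁ t ω - ν))) ^ (j - 1) ∂μ)))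
    (t : ℕ) (b : ℝ)
    (hb : b = ∫ ω, Real.exp (Z₁ t ω) / (1 + Real.exp (Z₁ t ω - ν)) ∂μ) :
    (∫⁻ ω, ENNReal.ofReal (Real.exp (2 * Z₁ (t + 1) ω)) ∂μ)
      ≤ ENNReal.ofReal (Real.exp (lam * (2 + p / q) * b)) ∧
    (∫⁻ ω, ENNReal.ofReal (Real.exp (3 * Z₁ (t + 1) ω)) ∂μ)
      ≤ ENNReal.ofReal (Real.exp (lam * (3 + 2 * (p / q) + (p / q) ^ 2) * b)) ∧
    (∀ h : ℕ, 2 ≤ h →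
      (∫⁻ ω, ENNReal.ofReal (Real.exp ((h : ℝ) * Z₀ (t + 1) ω)) ∂μ)
        = (∫⁻ ω, ENNReal.ofReal (Real.exp (((h : ℝ) - 1) * Z₁ (t + 1) ω)) ∂μ) ∧
      (∫⁻ ω, ENNReal.ofReal (Real.exp ((h : ℝ) * Z₀ (t + 1) ω)) ∂μ)
        ≤ ENNReal.ofReal (Real.exp (lam * b *
            ∑ j ∈ Finset.Icc 2 h, (h.choose j : ℝ) * (p / q - 1) ^ (j - 2)))) := by
  have hK0 : 0 < K := one_pos.trans_le hK
  have hexpν : exp ν = (n - K) / K := by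
    rw [hν, exp_log (div_pos (sub_pos.mpr hKn) hK0)]
  have hmom := lintegral_exp_mul_eq_of_change_of_measure (hchg (t + 1))
  have hbound : ∀ h : ℕ, 2 ≤ h →
      ∫⁻ ω, ENNReal.ofReal (exp ((h : ℝ) * Z₀ (t + 1) ω)) ∂μ
        ≤ ENNReal.ofReal (exp (lam * b *
            ∑ j ∈ Icc 2 h, (h.choose j : ℝ) * (p / q - 1) ^ (j - 2))) := by
    intro h hh
    rw [hexact t h hh, hb]
    refine ENNReal.ofReal_le_ofReal (exp_le_exp.mpr ?_)
    have hw : Measurable fun ω ↦ exp (Z₁ t ω) / (1 + exp (Z₁ t ω - ν)) := by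
      have := hZ₁ t; fun_prop
    have hI (m : ℕ) := integral_pow_succ_le_mul_integral (μ := μ) hw.aestronglyMeasurable
      (fun ω ↦ by positivity) (fun ω ↦ exp_div_one_add_exp_sub_le (Z₁ t ω) ν) m
    simpa using poisson_exponent_le hK0 hKn h0q hqp hexpν hlam
      (I := fun k ↦ ∫ ω, (exp (Z₁ t ω) / (1 + exp (Z₁ t ω - ν))) ^ k ∂μ) (by simpa using hI) h
  refine ⟨?_, ?_, fun h hh ↦ ⟨hmom h, hbound h hh⟩⟩
  · convert (hmom 3).symm.trans_le (hbound 3 (by norm_num)) using 3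
    · norm_num
    · rw [sum_Icc_two_three_choose_mul_pow]; ring
  · convert (hmom 4).symm.trans_le (hbound 4 (by norm_num)) using 3
    · norm_num
    · rw [sum_Icc_two_four_choose_mul_pow]; ring

/-- Bounds on exponential moments of BP log likelihood ratios on the Poisson
tree. `Z₀^t`, `Z₁^t` are the conditional laws of the BP log likelihood ratio
at the root (given root label 0 resp. 1), `b_t = E[e^{Z₁^t}/(1+e^{Z₁^t-ν})]`,
`ν = log((n-K)/K)`, `λ = K²(p-q)²/((n-K)q)`. The model enters through the
change-of-measure hypothesis `hchg` and the exact exponential-moment identity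
`hexact` coming from the Poisson offspring structure. Conclusions:
`E[e^{2Z₁^{t+1}}] ≤ exp(C b_t)` with `C = λ(2+p/q)`,
`E[e^{3Z₁^{t+1}}] ≤ exp(C' b_t)` with `C' = λ(3+2(p/q)+(p/q)²)`, and for any
integer `h ≥ 2`,
`E[e^{hZ₀^{t+1}}] = E[e^{(h-1)Z₁^{t+1}}] ≤ exp(λ b_t Σ_{j=2}^h C(h,j)(p/q-1)^{j-2})`. -/
theorem stmt_18 {Ω : Type*} [MeasurableSpace Ω] (μ : Measure Ω)
    [IsProbabilityMeasure μ]
    (K n p q : ℝ) (h0q : 0 < q) (hqp : q ≤ p) (hp1 : p ≤ 1)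
    (hK : 1 ≤ K) (hKn : K < n)
    (ν lam : ℝ) (hν : ν = Real.log ((n - K) / K))
    (hlam : lam = K ^ 2 * (p - q) ^ 2 / ((n - K) * q))
    (Z₀ Z₁ : ℕ → Ω → ℝ)
    (hZ₀ : ∀ t, Measurable (Z₀ t)) (hZ₁ : ∀ t, Measurable (Z₁ t))
    (hchg : ∀ (t : ℕ) (f : ℝ → ENNReal), Measurable f →
      (∫⁻ ω, f (Z₀ t ω) ∂μ)
        = ∫⁻ ω, f (Z₁ t ω) * ENNReal.ofReal (Real.exp (-(Z₁ t ω))) ∂μ)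
    (hexact : ∀ (t : ℕ) (h : ℕ), 2 ≤ h →
      (∫⁻ ω, ENNReal.ofReal (Real.exp ((h : ℝ) * Z₀ (t + 1) ω)) ∂μ)
        = ENNReal.ofReal (Real.exp (K * (p - q) *
            ∑ j ∈ Finset.Icc 2 h, (h.choose j : ℝ) * (lam / (K * (p - q))) ^ (j - 1)
              * ∫ ω, (Real.exp (Z₁ t ω) / (1 + Real.exp (Z₁ t ω - ν))) ^ (j - 1) ∂μ)))
    (t : ℕ) (b : ℝ)
    (hb : b = ∫ ω, Real.exp (Z₁ t ω) / (1 + Real.exp (Z₁ t ω - ν)) ∂μ) :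
    (∫⁻ ω, ENNReal.ofReal (Real.exp (2 * Z₁ (t + 1) ω)) ∂μ)
      ≤ ENNReal.ofReal (Real.exp (lam * (2 + p / q) * b)) ∧
    (∫⁻ ω, ENNReal.ofReal (Real.exp (3 * Z₁ (t + 1) ω)) ∂μ)
      ≤ ENNReal.ofReal (Real.exp (lam * (3 + 2 * (p / q) + (p / q) ^ 2) * b)) ∧
    (∀ h : ℕ, 2 ≤ h →
      (∫⁻ ω, ENNReal.ofReal (Real.exp ((h : ℝ) * Z₀ (t + 1) ω)) ∂μ)
        = (∫⁻ ω, ENNReal.ofReal (Real.exp (((h : ℝ) - 1) * Z₁ (t + 1) ω)) ∂μ) ∧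
      (∫⁻ ω, ENNReal.ofReal (Real.exp ((h : ℝ) * Z₀ (t + 1) ω)) ∂μ)
        ≤ ENNReal.ofReal (Real.exp (lam * b *
            ∑ j ∈ Finset.Icc 2 h, (h.choose j : ℝ) * (p / q - 1) ^ (j - 2)))) :=
  stmt_18_general μ K n p q h0q hqp hK hKn ν lam hν hlam Z₀ Z₁ hZ₁ hchg hexact t b hb
end
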